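/- Let p > 1 be real, let V₀(x) = −(1/(p−1))·Q(x) − (3/2)·x·Q'(x), and let Z₀ = 3Q'' + 3V₀'' + p·Q^{p−1}·V₀. Then ∫_ℝ Z₀(x)·Q(x) dx = ((p−5)/(4(p−1)))·∫_ℝ Q(x)² dx. In particular ∫_ℝ Z₀·Q ≠ 0 whenever p ≠ 5. -/

import Mathlib

open Real MeasureTheory

/-- The soliton profile `Q` for general power `p`. -/
noncomputable def Qgen (p : ℝ) (x : ℝ) : ℝ :=
  ((p + 1) / (2 * Real.cosh ((p - 1) / 2 * x) ^ 2)) ^ (1 / (p - 1))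

/-!
Differentiating `V₀` and using `Q'' = Q - Q ^ p` turns `Z₀ Q` into a combination of `Q²`,
`Q ^ (p - 1) Q²`, `x Q Q'` and `x Q ^ (p - 1) Q Q'`. Together with the first integral
`Q'² = Q² - 2 / (p + 1) Q ^ (p + 1)` this makes `Z₀ Q - (p - 5) / (4 (p - 1)) Q²` the derivative
of the explicit function `Z0QPrimitive`. Since `Q ≤ C e^{-|x|}`, all of these are `O(e^{-|x|})`,
so the integral of that derivative over `ℝ` vanishes; finally `∫ Q² > 0`.
-/

open Set Filter Asymptotics Topology

lemma integrable_exp_neg_abs : Integrable fun x : ℝ => exp (-|x|) := by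
  rw [← integrableOn_univ, ← Iic_union_Ioi (a := (0 : ℝ))]
  refine ((integrableOn_exp_Iic 0).congr_fun (fun x hx => ?_) measurableSet_Iic).union
    ((integrableOn_exp_neg_Ioi 0).congr_fun (fun x hx => ?_) measurableSet_Ioi)
  · rw [abs_of_nonpos hx, neg_neg]
  · rw [abs_of_pos hx]

lemma tendsto_exp_neg_abs_cocompact :
    Tendsto (fun x : ℝ => exp (-|x|)) (cocompact ℝ) (𝓝 0) :=
  tendsto_exp_neg_atTop_nhds_zero.comp tendsto_norm_cocompact_atTop

theorem integral_eq_zero_of_hasDerivAt_of_isBigO {F f : ℝ → ℝ}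
    (hF : ∀ x, HasDerivAt F (f x) x) (hf : Integrable f)
    (hFw : F =O[⊤] fun x => exp (-|x|)) : ∫ x, f x = 0 := by
  have h := (hFw.mono le_top).trans_tendsto tendsto_exp_neg_abs_cocompact
  simpa using integral_of_hasDerivAt_of_tendsto hF hf
    (h.mono_left atBot_le_cocompact) (h.mono_left atTop_le_cocompact)

section Soliton

variable {p : ℝ}

lemma Qgen_base_pos (hp : 1 < p) (x : ℝ) :
    0 < (p + 1) / (2 * cosh ((p - 1) / 2 * x) ^ 2) := by
  have := cosh_pos ((p - 1) / 2 * x)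
  exact div_pos (by linarith) (by positivity)

lemma Qgen_pos (hp : 1 < p) (x : ℝ) : 0 < Qgen p x :=
  rpow_pos_of_pos (Qgen_base_pos hp x) _

lemma Qgen_rpow_sub_one (hp : 1 < p) (x : ℝ) :
    Qgen p x ^ (p - 1) = (p + 1) / (2 * cosh ((p - 1) / 2 * x) ^ 2) := by
  rw [Qgen, ← rpow_mul (Qgen_base_pos hp x).le,
    one_div_mul_cancel (by linarith : p - 1 ≠ 0), rpow_one]

lemma Qgen_rpow_sub_one_le (hp : 1 < p) (x : ℝ) : Qgen p x ^ (p - 1) ≤ (p + 1) / 2 := by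
  rw [Qgen_rpow_sub_one hp x]
  have h := one_le_cosh ((p - 1) / 2 * x)
  gcongr
  nlinarith

lemma hasDerivAt_Qgen_base (p x : ℝ) :
    HasDerivAt (fun y => (p + 1) / (2 * cosh ((p - 1) / 2 * y) ^ 2))
      (-(p - 1) * ((p + 1) / (2 * cosh ((p - 1) / 2 * x) ^ 2)) * tanh ((p - 1) / 2 * x)) x := by
  have hc := (cosh_pos ((p - 1) / 2 * x)).ne'
  have hcosh := ((hasDerivAt_id x).const_mul ((p - 1) / 2)).cosh
  refine ((hasDerivAt_const x (p + 1)).div ((hcosh.pow 2).const_mul 2) (by simpa)).congr_deriv ?_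
  simp only [id, Pi.pow_apply, tanh_eq_sinh_div_cosh]
  field_simp
  ring

lemma hasDerivAt_Qgen (hp : 1 < p) (x : ℝ) :
    HasDerivAt (Qgen p) (-(Qgen p x * tanh ((p - 1) / 2 * x))) x := by
  refine ((hasDerivAt_Qgen_base p x).rpow_const
    (Or.inl (Qgen_base_pos hp x).ne')).congr_deriv ?_
  rw [rpow_sub_one (Qgen_base_pos hp x).ne', Qgen]
  have hp1 : p - 1 ≠ 0 := by linarith
  field_simp

lemma deriv_Qgen (hp : 1 < p) (x : ℝ) :
    deriv (Qgen p) x = -(Qgen p x * tanh ((p - 1) / 2 * x)) :=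
  (hasDerivAt_Qgen hp x).deriv

lemma hasDerivAt_Qgen' (hp : 1 < p) (x : ℝ) : HasDerivAt (Qgen p) (deriv (Qgen p) x) x :=
  (hasDerivAt_Qgen hp x).differentiableAt.hasDerivAt

lemma Qgen_rpow_self (hp : 1 < p) (x : ℝ) : Qgen p x ^ p = Qgen p x ^ (p - 1) * Qgen p x := by
  rw [← rpow_add_one (Qgen_pos hp x).ne', sub_add_cancel]

lemma Qgen_rpow_add_one (hp : 1 < p) (x : ℝ) :
    Qgen p x ^ (p + 1) = Qgen p x ^ (p - 1) * Qgen p x ^ 2 := by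
  rw [← rpow_natCast, ← rpow_add (Qgen_pos hp x)]
  congr 1
  push_cast
  ring

lemma hasDerivAt_deriv_Qgen (hp : 1 < p) (x : ℝ) :
    HasDerivAt (deriv (Qgen p)) (Qgen p x - Qgen p x ^ p) x := by
  have hc := (cosh_pos ((p - 1) / 2 * x)).ne'
  have hlin := (hasDerivAt_id x).const_mul ((p - 1) / 2)
  have htanh := hlin.sinh.div hlin.cosh hc
  rw [funext (deriv_Qgen hp)]
  simp only [tanh_eq_sinh_div_cosh]
  refine ((hasDerivAt_Qgen hp x).mul htanh).neg.congr_deriv ?_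
  rw [Qgen_rpow_self hp, Qgen_rpow_sub_one hp, tanh_eq_sinh_div_cosh]
  simp only [id, mul_one, Pi.div_apply]
  generalize (p - 1) / 2 * x = t at hc ⊢
  field_simp
  linear_combination (-(Qgen p x * (p + 1))) * cosh_sq_sub_sinh_sq t

lemma deriv_Qgen_sq (hp : 1 < p) (x : ℝ) :
    deriv (Qgen p) x ^ 2 = Qgen p x ^ 2 - 2 / (p + 1) * Qgen p x ^ (p + 1) := by
  rw [deriv_Qgen hp, Qgen_rpow_add_one hp, Qgen_rpow_sub_one hp, tanh_eq_sinh_div_cosh]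
  have hc := (cosh_pos ((p - 1) / 2 * x)).ne'
  have hp1 : p + 1 ≠ 0 := by linarith
  generalize (p - 1) / 2 * x = t at hc ⊢
  field_simp
  linear_combination (-Qgen p x ^ 2) * cosh_sq_sub_sinh_sq t

lemma abs_deriv_Qgen_le (hp : 1 < p) (x : ℝ) : |deriv (Qgen p) x| ≤ Qgen p x := by
  rw [deriv_Qgen hp, abs_neg, abs_mul, abs_of_pos (Qgen_pos hp x)]
  exact mul_le_of_le_one_right (Qgen_pos hp x).le (abs_tanh_lt_one _).le

lemma Qgen_le_exp (hp : 1 < p) (x : ℝ) :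
    Qgen p x ≤ (2 * (p + 1)) ^ (1 / (p - 1)) * exp (-|x|) := by
  have hp1 : 0 < p - 1 := by linarith
  have hcosh : exp ((p - 1) / 2 * |x|) ≤ 2 * cosh ((p - 1) / 2 * x) := by
    have := exp_abs_le ((p - 1) / 2 * x)
    rw [abs_mul, abs_of_pos (by linarith : 0 < (p - 1) / 2)] at this
    rw [cosh_eq]
    linarith
  have hbase : (p + 1) / (2 * cosh ((p - 1) / 2 * x) ^ 2)
      ≤ 2 * (p + 1) * exp (-|x|) ^ (p - 1) := by
    have hsq : exp ((p - 1) * |x|) ≤ (2 * cosh ((p - 1) / 2 * x)) ^ 2 := by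
      calc exp ((p - 1) * |x|) = exp ((p - 1) / 2 * |x|) ^ 2 := by
            rw [← exp_nat_mul]; ring_nf
        _ ≤ _ := by gcongr
    have hone : 1 ≤ exp (-|x| * (p - 1)) * (2 * cosh ((p - 1) / 2 * x)) ^ 2 := by
      calc (1 : ℝ) = exp (-|x| * (p - 1)) * exp ((p - 1) * |x|) := by
            rw [← exp_add]; ring_nf; exact exp_zero.symm
        _ ≤ _ := by gcongr
    rw [← exp_mul, div_le_iff₀ (by positivity)]
    nlinarith
  calc Qgen p x ≤ (2 * (p + 1) * exp (-|x|) ^ (p - 1)) ^ (1 / (p - 1)) :=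
        rpow_le_rpow (Qgen_base_pos hp x).le hbase (by positivity)
    _ = _ := by
        rw [mul_rpow (by linarith) (by positivity), ← rpow_mul (exp_pos _).le,
          mul_one_div_cancel hp1.ne', rpow_one]

lemma one_add_abs_mul_Qgen_sq_le (hp : 1 < p) (x : ℝ) :
    (1 + |x|) * Qgen p x ^ 2 ≤ ((2 * (p + 1)) ^ (1 / (p - 1))) ^ 2 * exp (-|x|) := by
  have hQ := pow_le_pow_left₀ (Qgen_pos hp x).le (Qgen_le_exp hp x) 2
  have hx : (1 + |x|) * exp (-|x|) ≤ 1 := by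
    rw [exp_neg, ← div_eq_mul_inv, div_le_one (exp_pos _), add_comm]
    exact add_one_le_exp _
  calc (1 + |x|) * Qgen p x ^ 2
      ≤ (1 + |x|) * ((2 * (p + 1)) ^ (1 / (p - 1)) * exp (-|x|)) ^ 2 := by gcongr
    _ = ((2 * (p + 1)) ^ (1 / (p - 1))) ^ 2 * exp (-|x|) * ((1 + |x|) * exp (-|x|)) := by ring
    _ ≤ ((2 * (p + 1)) ^ (1 / (p - 1))) ^ 2 * exp (-|x|) := by
        apply mul_le_of_le_one_right (by positivity) hx

lemma isBigO_Qgen_sq (hp : 1 < p) :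
    (fun x => Qgen p x ^ 2) =O[⊤] fun x => exp (-|x|) := by
  refine IsBigO.of_bound (((2 * (p + 1)) ^ (1 / (p - 1))) ^ 2) (Eventually.of_forall fun x => ?_)
  rw [norm_of_nonneg (by positivity), norm_of_nonneg (by positivity)]
  refine le_trans ?_ (one_add_abs_mul_Qgen_sq_le hp x)
  nlinarith [abs_nonneg x, sq_nonneg (Qgen p x)]

lemma isBigO_id_mul_Qgen_sq (hp : 1 < p) :
    (fun x => x * Qgen p x ^ 2) =O[⊤] fun x => exp (-|x|) := by
  refine IsBigO.of_bound (((2 * (p + 1)) ^ (1 / (p - 1))) ^ 2) (Eventually.of_forall fun x => ?_)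
  rw [norm_mul, norm_of_nonneg (sq_nonneg _), norm_of_nonneg (exp_pos _).le, norm_eq_abs]
  refine le_trans ?_ (one_add_abs_mul_Qgen_sq_le hp x)
  nlinarith [abs_nonneg x, sq_nonneg (Qgen p x)]

lemma isBigO_Qgen_mul_deriv (hp : 1 < p) :
    (fun x => Qgen p x * deriv (Qgen p) x) =O[⊤] fun x => Qgen p x ^ 2 := by
  refine IsBigO.of_bound 1 (Eventually.of_forall fun x => ?_)
  rw [norm_mul, norm_of_nonneg (Qgen_pos hp x).le, norm_of_nonneg (sq_nonneg _), norm_eq_abs,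
    one_mul, sq]
  exact mul_le_mul_of_nonneg_left (abs_deriv_Qgen_le hp x) (Qgen_pos hp x).le

lemma isBigO_Qgen_rpow_mul (hp : 1 < p) (f : ℝ → ℝ) :
    (fun x => Qgen p x ^ (p - 1) * f x) =O[⊤] f := by
  refine IsBigO.of_bound ((p + 1) / 2) (Eventually.of_forall fun x => ?_)
  rw [norm_mul, norm_of_nonneg (rpow_nonneg (Qgen_pos hp x).le _)]
  exact mul_le_mul_of_nonneg_right (Qgen_rpow_sub_one_le hp x) (norm_nonneg _)

lemma continuous_Qgen (hp : 1 < p) : Continuous (Qgen p) :=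
  continuous_iff_continuousAt.2 fun x => (hasDerivAt_Qgen hp x).continuousAt

lemma continuous_deriv_Qgen (hp : 1 < p) : Continuous (deriv (Qgen p)) :=
  continuous_iff_continuousAt.2 fun x => (hasDerivAt_deriv_Qgen hp x).continuousAt

noncomputable def V0 (p x : ℝ) : ℝ :=
  -(1 / (p - 1)) * Qgen p x - 3 / 2 * x * deriv (Qgen p) x

noncomputable def Z0 (p x : ℝ) : ℝ :=
  3 * deriv (deriv (Qgen p)) x + 3 * deriv (deriv (V0 p)) x + p * Qgen p x ^ (p - 1) * V0 p x

lemma deriv_deriv_Qgen (hp : 1 < p) (x : ℝ) :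
    deriv (deriv (Qgen p)) x = Qgen p x - Qgen p x ^ p :=
  (hasDerivAt_deriv_Qgen hp x).deriv

lemma hasDerivAt_deriv_deriv_Qgen (hp : 1 < p) (x : ℝ) :
    HasDerivAt (deriv (deriv (Qgen p))) ((1 - p * Qgen p x ^ (p - 1)) * deriv (Qgen p) x) x := by
  rw [funext (deriv_deriv_Qgen hp)]
  exact ((hasDerivAt_Qgen' hp x).sub ((hasDerivAt_Qgen' hp x).rpow_const
    (Or.inl (Qgen_pos hp x).ne'))).congr_deriv (by ring)

lemma hasDerivAt_V0 (hp : 1 < p) (x : ℝ) :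
    HasDerivAt (V0 p) (-(1 / (p - 1)) * deriv (Qgen p) x
      - 3 / 2 * (deriv (Qgen p) x + x * deriv (deriv (Qgen p)) x)) x := by
  have h := ((hasDerivAt_Qgen' hp x).const_mul (-(1 / (p - 1)))).sub
    (((hasDerivAt_id' x).const_mul (3 / 2)).mul
      (hasDerivAt_deriv_Qgen hp x).differentiableAt.hasDerivAt)
  exact h.congr_deriv (by ring)

lemma hasDerivAt_deriv_V0 (hp : 1 < p) (x : ℝ) :
    HasDerivAt (deriv (V0 p)) (-(1 / (p - 1)) * deriv (deriv (Qgen p)) x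
      - 3 / 2 * (2 * deriv (deriv (Qgen p)) x
        + x * ((1 - p * Qgen p x ^ (p - 1)) * deriv (Qgen p) x))) x := by
  rw [funext fun y => (hasDerivAt_V0 hp y).deriv]
  have hQ' := (hasDerivAt_deriv_Qgen hp x).differentiableAt.hasDerivAt
  have h := (hQ'.const_mul (-(1 / (p - 1)))).sub ((hQ'.add ((hasDerivAt_id' x).mul
    (hasDerivAt_deriv_deriv_Qgen hp x))).const_mul (3 / 2))
  exact h.congr_deriv (by ring)

lemma Z0_mul_Qgen (hp : 1 < p) (x : ℝ) :
    Z0 p x * Qgen p x = (3 - 6 * p) / (p - 1) * Qgen p x ^ 2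
      + (5 * p - 3) / (p - 1) * (Qgen p x ^ (p - 1) * Qgen p x ^ 2)
      - 9 / 2 * (x * (Qgen p x * deriv (Qgen p) x))
      + 3 * p * (Qgen p x ^ (p - 1) * (x * (Qgen p x * deriv (Qgen p) x))) := by
  rw [Z0, (hasDerivAt_deriv_V0 hp x).deriv, V0, deriv_deriv_Qgen hp, Qgen_rpow_self hp]
  have hp1 : p - 1 ≠ 0 := by linarith
  field_simp
  ring

lemma continuous_Z0_mul_Qgen (hp : 1 < p) : Continuous fun x => Z0 p x * Qgen p x := by
  have hQ := continuous_Qgen hp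
  have hQ' := continuous_deriv_Qgen hp
  have hs := hQ.rpow_const fun x => Or.inr (by linarith : 0 ≤ p - 1)
  rw [funext (Z0_mul_Qgen hp)]
  fun_prop

noncomputable def Z0QPrimitive (p x : ℝ) : ℝ :=
  (1 - 2 * p) / (p - 1) * (Qgen p x * deriv (Qgen p) x)
    + x * (-(9 / 4) * Qgen p x ^ 2 + 3 * p / (p + 1) * Qgen p x ^ (p + 1))

lemma hasDerivAt_Z0QPrimitive (hp : 1 < p) (x : ℝ) :
    HasDerivAt (Z0QPrimitive p)
      (Z0 p x * Qgen p x - (p - 5) / (4 * (p - 1)) * Qgen p x ^ 2) x := by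
  have hQ := hasDerivAt_Qgen' hp x
  have h := ((hQ.mul (hasDerivAt_deriv_Qgen hp x)).const_mul ((1 - 2 * p) / (p - 1))).add
    ((hasDerivAt_id' x).mul (((hQ.pow 2).const_mul (-(9 / 4))).add
      ((hQ.rpow_const (p := p + 1) (Or.inl (Qgen_pos hp x).ne')).const_mul (3 * p / (p + 1)))))
  refine h.congr_deriv ?_
  have hE := deriv_Qgen_sq hp x
  simp only [Pi.add_apply, Pi.pow_apply, add_sub_cancel_right, one_mul]
  rw [Z0_mul_Qgen hp, Qgen_rpow_self hp, Qgen_rpow_add_one hp]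
  rw [Qgen_rpow_add_one hp] at hE
  have hp1 : p - 1 ≠ 0 := by linarith
  have hp2 : p + 1 ≠ 0 := by linarith
  generalize Qgen p x = q, deriv (Qgen p) x = r, Qgen p x ^ (p - 1) = s at hE ⊢
  field_simp
  field_simp at hE
  linear_combination (-8 * (2 * p - 1)) * hE

lemma isBigO_Z0QPrimitive (hp : 1 < p) : Z0QPrimitive p =O[⊤] fun x => exp (-|x|) := by
  have hF : Z0QPrimitive p = fun x => (1 - 2 * p) / (p - 1) * (Qgen p x * deriv (Qgen p) x)
      + -(9 / 4) * (x * Qgen p x ^ 2)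
      + 3 * p / (p + 1) * (Qgen p x ^ (p - 1) * (x * Qgen p x ^ 2)) := by
    ext x
    rw [Z0QPrimitive, Qgen_rpow_add_one hp]
    ring
  rw [hF]
  exact ((((isBigO_Qgen_mul_deriv hp).trans (isBigO_Qgen_sq hp)).const_mul_left _).add
    ((isBigO_id_mul_Qgen_sq hp).const_mul_left _)).add
    (((isBigO_Qgen_rpow_mul hp _).trans (isBigO_id_mul_Qgen_sq hp)).const_mul_left _)

lemma isBigO_Z0_mul_Qgen (hp : 1 < p) :
    (fun x => Z0 p x * Qgen p x) =O[⊤] fun x => exp (-|x|) := by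
  have hxQQ' : (fun x => x * (Qgen p x * deriv (Qgen p) x)) =O[⊤] fun x => exp (-|x|) :=
    ((isBigO_refl (fun x : ℝ => x) ⊤).mul (isBigO_Qgen_mul_deriv hp)).trans
      (isBigO_id_mul_Qgen_sq hp)
  rw [funext (Z0_mul_Qgen hp)]
  exact ((((isBigO_Qgen_sq hp).const_mul_left _).add
    (((isBigO_Qgen_rpow_mul hp _).trans (isBigO_Qgen_sq hp)).const_mul_left _)).sub
    (hxQQ'.const_mul_left _)).add (((isBigO_Qgen_rpow_mul hp _).trans hxQQ').const_mul_left _)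

end Soliton

theorem Z0_Q_integral (p : ℝ) (hp : 1 < p) (V₀ Z₀ : ℝ → ℝ)
    (hV₀ : ∀ x : ℝ, V₀ x = -(1 / (p - 1)) * Qgen p x - 3 / 2 * x * deriv (Qgen p) x)
    (hZ₀ : ∀ x : ℝ, Z₀ x = 3 * deriv (deriv (Qgen p)) x + 3 * deriv (deriv V₀) x
        + p * Qgen p x ^ (p - 1) * V₀ x) :
    (∫ x : ℝ, Z₀ x * Qgen p x) = (p - 5) / (4 * (p - 1)) * ∫ x : ℝ, Qgen p x ^ 2 ∧
    (p ≠ 5 → (∫ x : ℝ, Z₀ x * Qgen p x) ≠ 0) := by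
  obtain rfl : V₀ = V0 p := funext hV₀
  obtain rfl : Z₀ = Z0 p := funext hZ₀
  have hQ : Continuous fun x => Qgen p x ^ 2 := (continuous_Qgen hp).pow 2
  have hQ_int : Integrable fun x => Qgen p x ^ 2 :=
    (isBigO_Qgen_sq hp).integrable hQ.aestronglyMeasurable integrable_exp_neg_abs
  have hZQ_int : Integrable fun x => Z0 p x * Qgen p x :=
    (isBigO_Z0_mul_Qgen hp).integrable (continuous_Z0_mul_Qgen hp).aestronglyMeasurable
      integrable_exp_neg_abs
  have hint : ∫ x, Z0 p x * Qgen p x = (p - 5) / (4 * (p - 1)) * ∫ x, Qgen p x ^ 2 := by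
    have h := integral_eq_zero_of_hasDerivAt_of_isBigO (hasDerivAt_Z0QPrimitive hp)
      (hZQ_int.sub (hQ_int.const_mul _)) (isBigO_Z0QPrimitive hp)
    rwa [integral_sub hZQ_int (hQ_int.const_mul _), integral_const_mul, sub_eq_zero] at h
  refine ⟨hint, fun hp5 => ?_⟩
  have hpos : 0 < ∫ x, Qgen p x ^ 2 := integral_pos_of_integrable_nonneg_nonzero (x := 0) hQ
    hQ_int (fun x => sq_nonneg _) (pow_pos (Qgen_pos hp 0) 2).ne'
  rw [hint]
  exact mul_ne_zero (div_ne_zero (sub_ne_zero.2 hp5) (by linarith)) hpos.ne'
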